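/- Let T ∈ GL(n, Z) be of infinite order such that all complex eigenvalues of T have absolute value 1. Then for all but finitely many primes p, the order of T modulo p in GL(n, F_p) is divisible by p. -/

import Mathlib

/-!
By Kronecker's theorem the eigenvalues of `T`, algebraic integers all of whose conjugates lie on
the unit circle, are roots of unity; by Cayley–Hamilton some power `T ^ m` is unipotent, i.e.
`N = T ^ m - 1` is a nilpotent integer matrix, and `N ≠ 0` since `T` has infinite order. For
every prime `p` not dividing a fixed nonzero entry of `N`, the reduction of `T ^ m` is `1 + N̄`
with `N̄ ≠ 0` nilpotent, and in characteristic `p` we get `(1 + N̄) ^ p ^ k = 1 + N̄ ^ p ^ k = 1`.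
So the order of the reduction of `T ^ m` is a nontrivial power of `p`, and it divides the order
of the reduction of `T`.
-/

open Polynomial IntermediateField

def IsQuasiUnipotent {R : Type*} [Ring R] (a : R) : Prop :=
  ∃ m, 0 < m ∧ IsNilpotent (a ^ m - 1)

theorem IsQuasiUnipotent.of_map {R S F : Type*} [Ring R] [Ring S] [FunLike F R S]
    [RingHomClass F R S] {f : F} (hf : Function.Injective f) {a : R}
    (h : IsQuasiUnipotent (f a)) : IsQuasiUnipotent a := by
  obtain ⟨m, hm, hnil⟩ := h
  refine ⟨m, hm, (IsNilpotent.map_iff hf).1 ?_⟩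
  rwa [map_sub, map_pow, map_one]

theorem Polynomial.Monic.isOfFinOrder_of_roots_norm_eq_one {P : ℤ[X]} (hP : P.Monic)
    (habs : ∀ w : ℂ, aeval w P = 0 → ‖w‖ = 1) {z : ℂ} (hz : aeval z P = 0) :
    IsOfFinOrder z := by
  have hzi : IsIntegral ℤ z := ⟨P, hP, by rwa [← aeval_def]⟩
  have : FiniteDimensional ℚ ℚ⟮z⟯ := adjoin.finiteDimensional hzi.tower_top
  have : NumberField ℚ⟮z⟯ := ⟨⟩
  set x := AdjoinSimple.gen ℚ z
  have hxz : algebraMap ℚ⟮z⟯ ℂ x = z := AdjoinSimple.algebraMap_gen ℚ z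
  have hx : aeval x P = 0 := (algebraMap ℚ⟮z⟯ ℂ).injective <| by
    rw [map_zero, ← aeval_algebraMap_apply, hxz, hz]
  -- Kronecker's theorem in the number field `ℚ(z)`: every conjugate of `x` is a root of `P`.
  obtain ⟨k, hk, hxk⟩ := NumberField.Embeddings.pow_eq_one_of_norm_eq_one ℚ⟮z⟯ ℂ
    ⟨P, hP, by rwa [← aeval_def]⟩ fun φ =>
      habs _ ((aeval_algHom_apply φ.toIntAlgHom x P).trans (by rw [hx, map_zero]))
  rw [← hxz]
  exact (algebraMap ℚ⟮z⟯ ℂ : ℚ⟮z⟯ →* ℂ).isOfFinOrder (isOfFinOrder_iff_pow_eq_one.2 ⟨k, hk, hxk⟩)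

theorem Polynomial.Monic.dvd_X_pow_sub_one_pow {K : Type*} [Field K] {f : K[X]} (hf : f.Monic)
    (hs : f.Splits) {m : ℕ} (h : ∀ z ∈ f.roots, z ^ m = 1) :
    f ∣ (X ^ m - 1) ^ f.natDegree := by
  conv_lhs => rw [hs.eq_prod_roots_of_monic hf]
  calc (f.roots.map fun r => X - C r).prod ∣ (f.roots.map fun _ => (X ^ m - 1 : K[X])).prod :=
        Multiset.prod_dvd_prod_of_dvd _ _ fun r hr => dvd_iff_isRoot.2 (by simp [h r hr])
    _ = (X ^ m - 1) ^ f.natDegree := by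
        simp [Multiset.map_const', Multiset.prod_replicate, hs.natDegree_eq_card_roots]

theorem Matrix.isQuasiUnipotent_of_forall_isOfFinOrder {K n : Type*} [Field K] [IsAlgClosed K]
    [Fintype n] [DecidableEq n] {A : Matrix n n K} (h : ∀ z ∈ A.charpoly.roots, IsOfFinOrder z) :
    IsQuasiUnipotent A := by
  classical
  set m := ∏ z ∈ A.charpoly.roots.toFinset, orderOf z
  have hm : ∀ z ∈ A.charpoly.roots, z ^ m = 1 := fun z hz =>
    orderOf_dvd_iff_pow_eq_one.1 (Finset.dvd_prod_of_mem _ (Multiset.mem_toFinset.2 hz))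
  obtain ⟨q, hq⟩ := A.charpoly_monic.dvd_X_pow_sub_one_pow (IsAlgClosed.splits _) hm
  refine ⟨m, Finset.prod_pos fun z hz => (h z (Multiset.mem_toFinset.1 hz)).orderOf_pos,
    A.charpoly.natDegree, ?_⟩
  simpa [A.aeval_self_charpoly] using congrArg (aeval A) hq

theorem Matrix.isQuasiUnipotent_of_charpoly_roots_norm_eq_one {n : Type*} [Fintype n]
    [DecidableEq n] (A : Matrix n n ℤ)
    (habs : ∀ z : ℂ, (A.map (Int.cast : ℤ → ℂ)).charpoly.IsRoot z → ‖z‖ = 1) :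
    IsQuasiUnipotent A := by
  have hchar : (A.map (algebraMap ℤ ℂ)).charpoly = A.charpoly.map (algebraMap ℤ ℂ) :=
    A.charpoly_map (algebraMap ℤ ℂ)
  have hroots : ∀ w : ℂ, aeval w A.charpoly = 0 → ‖w‖ = 1 := fun w hw => habs w <| by
    change (A.map (algebraMap ℤ ℂ)).charpoly.IsRoot w
    rwa [hchar, IsRoot, eval_map_algebraMap]
  refine IsQuasiUnipotent.of_map (f := (algebraMap ℤ ℂ).mapMatrix)
    (Matrix.map_injective Int.cast_injective) (Matrix.isQuasiUnipotent_of_forall_isOfFinOrder ?_)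
  intro z hz
  rw [RingHom.mapMatrix_apply, hchar] at hz
  exact A.charpoly_monic.isOfFinOrder_of_roots_norm_eq_one hroots (mem_aroots'.1 hz).2

theorem dvd_orderOf_of_isNilpotent_sub_one {R : Type*} [Ring R] (p : ℕ) [Fact p.Prime]
    [CharP R p] {u : Rˣ} (hnil : IsNilpotent ((u : R) - 1)) (hu : u ≠ 1) : p ∣ orderOf u := by
  obtain ⟨k, hk⟩ := hnil
  have hpow : u ^ p ^ k = 1 := Units.ext <| sub_eq_zero.1 <| by
    rw [Units.val_pow_eq_pow_val, Units.val_one, ← one_pow (p ^ k),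
      ← sub_pow_char_pow_of_commute p k (Commute.one_right (u : R))]
    exact pow_eq_zero_of_le (Nat.lt_pow_self (Fact.out : p.Prime).one_lt).le hk
  obtain ⟨j, -, hj⟩ := (Nat.dvd_prime_pow Fact.out).1 (orderOf_dvd_of_pow_eq_one hpow)
  have hj0 : j ≠ 0 := by
    rintro rfl
    exact hu (orderOf_eq_one_iff.1 hj)
  exact hj ▸ dvd_pow_self p hj0

theorem Matrix.finite_setOf_map_intCast_eq_zero {m n : Type*} {N : Matrix m n ℤ} (hN : N ≠ 0) :
    {p : ℕ | N.map (Int.cast : ℤ → ZMod p) = 0}.Finite := by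
  obtain ⟨i, j, hij⟩ : ∃ i j, N i j ≠ 0 := by
    by_contra! h
    exact hN (Matrix.ext h)
  refine (Nat.divisors (N i j).natAbs).finite_toSet.subset fun p hp => ?_
  have hdvd := (ZMod.intCast_zmod_eq_zero_iff_dvd (N i j) p).1 (congrFun (congrFun hp i) j)
  exact Nat.mem_divisors.2 ⟨Int.natCast_dvd.1 hdvd, Int.natAbs_ne_zero.2 hij⟩

/-- If `T ∈ GL(n, ℤ)` has infinite order and all its complex eigenvalues have absolute
value `1`, then for all but finitely many primes `p` the order of the reduction of `T`
modulo `p` in `GL(n, F_p)` is divisible by `p`. -/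
theorem order_mod_p_divisible_of_eigenvalues_abs_one (n : ℕ) (T : GL (Fin n) ℤ)
    (hinf : ∀ k : ℕ, 0 < k → T ^ k ≠ 1)
    (habs : ∀ z : ℂ, (Matrix.charpoly
        (((T : Matrix (Fin n) (Fin n) ℤ)).map (Int.cast : ℤ → ℂ))).IsRoot z →
      ‖z‖ = 1) :
    {p : ℕ | p.Prime ∧
      ¬ p ∣ orderOf (Matrix.GeneralLinearGroup.map (Int.castRingHom (ZMod p)) T)}.Finite := by
  set A : Matrix (Fin n) (Fin n) ℤ := ↑T
  obtain ⟨m, hm, hnil⟩ := A.isQuasiUnipotent_of_charpoly_roots_norm_eq_one habs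
  have hN : A ^ m - 1 ≠ 0 := sub_ne_zero.2 fun h => hinf m hm (Units.ext (by simpa using h))
  refine (Matrix.finite_setOf_map_intCast_eq_zero hN).subset fun p ⟨hp, hpT⟩ => ?_
  by_contra hNp
  have : Fact p.Prime := ⟨hp⟩
  -- the zero ring of `0 × 0` matrices does not have characteristic `p`
  have : Nonempty (Fin n) := by
    by_contra! h
    exact hN (Subsingleton.elim _ _)
  set f := (Int.castRingHom (ZMod p)).mapMatrix (m := Fin n)
  have hTm : ((Matrix.GeneralLinearGroup.map (Int.castRingHom (ZMod p)) T ^ m :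
      GL (Fin n) (ZMod p)) : Matrix (Fin n) (Fin n) (ZMod p)) - 1 = f (A ^ m - 1) := by
    rw [map_sub, map_pow, map_one, Units.val_pow_eq_pow_val]
    rfl
  refine hpT ((dvd_orderOf_of_isNilpotent_sub_one p (hTm ▸ hnil.map f) fun h1 => hNp ?_).trans
    (orderOf_pow_dvd m))
  change f (A ^ m - 1) = 0
  rw [← hTm, h1, Units.val_one, sub_self]
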